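/- Let φ : ℝ → ℝ be continuously differentiable on [a,b] with a < b, and let m₁ ≤ φ'(t) ≤ M₁ on [a,b]. Then |(φ(a)+φ(b))/6 + (2/3)φ((a+b)/2) - (1/(b-a))∫_a^b φ(t) dt| ≤ (5/72)(M₁ - m₁)(b-a). -/

import Mathlib

/-!
Integrating by parts on each half of `[a, b]` writes the Simpson error as
`(b - a)⁻¹ ∫ K φ'` with the Peano kernel `K t = t - (5a + b)/6` on the left half and
`K t = t - (a + 5b)/6` on the right half, and `∫ |K| = 5 (b - a)² / 36`.
Since Simpson's rule is exact on affine functions, `φ` may be replaced by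
`φ t - (m₁ + M₁)/2 * t`, whose derivative is bounded by `(M₁ - m₁)/2`.
-/

open intervalIntegral MeasureTheory Set

noncomputable def simpsonError (f : ℝ → ℝ) (a b : ℝ) : ℝ :=
  (f a + f b) / 6 + 2 / 3 * f ((a + b) / 2) - 1 / (b - a) * ∫ t in a..b, f t

theorem simpsonError_sub_const_mul_id {f : ℝ → ℝ} {a b : ℝ} (hab : a ≠ b)
    (hf : IntervalIntegrable f volume a b) (d : ℝ) :
    simpsonError (fun t => f t - d * t) a b = simpsonError f a b := by
  have hL : b - a ≠ 0 := sub_ne_zero.2 hab.symm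
  unfold simpsonError
  rw [integral_sub hf (intervalIntegrable_id.const_mul d), intervalIntegral.integral_const_mul,
    integral_id]
  field_simp
  ring

theorem integral_abs_sub_of_mem_Icc {u v c : ℝ} (huc : u ≤ c) (hcv : c ≤ v) :
    ∫ t in u..v, |t - c| = ((c - u) ^ 2 + (v - c) ^ 2) / 2 := by
  have hint : ∀ p q : ℝ, IntervalIntegrable (fun t => |t - c|) volume p q := fun p q =>
    (continuous_id.sub continuous_const).abs.intervalIntegrable p q
  have hleft := integral_pow_abs_sub_uIoc (a := c) (b := u) (n := 1)
  have hright := integral_pow_abs_sub_uIoc (a := c) (b := v) (n := 1)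
  rw [uIoc_comm, uIoc_of_le huc, ← integral_of_le huc] at hleft
  rw [uIoc_of_le hcv, ← integral_of_le hcv] at hright
  simp only [pow_one] at hleft hright
  rw [← integral_add_adjacent_intervals (hint u c) (hint c v), hleft, hright]
  norm_num [sq_abs]
  ring

theorem abs_integral_sub_mul_le {g : ℝ → ℝ} {u v c K : ℝ} (huc : u ≤ c) (hcv : c ≤ v)
    (hK : ∀ x ∈ Icc u v, |g x| ≤ K) :
    |∫ t in u..v, (t - c) * g t| ≤ K * (((c - u) ^ 2 + (v - c) ^ 2) / 2) := by
  calc |∫ t in u..v, (t - c) * g t| ≤ ∫ t in u..v, |t - c| * K := by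
        rw [← Real.norm_eq_abs]
        refine norm_integral_le_of_norm_le (huc.trans hcv) (ae_of_all _ fun x hx => ?_) ?_
        · rw [Real.norm_eq_abs, abs_mul]
          exact mul_le_mul_of_nonneg_left (hK x (Ioc_subset_Icc_self hx)) (abs_nonneg _)
        · exact ((continuous_id.sub continuous_const).abs.mul continuous_const).intervalIntegrable
            u v
    _ = K * (((c - u) ^ 2 + (v - c) ^ 2) / 2) := by
        rw [intervalIntegral.integral_mul_const, integral_abs_sub_of_mem_Icc huc hcv, mul_comm]

theorem integral_eq_sub_integral_sub_mul_deriv {ψ ψ' : ℝ → ℝ} {u v : ℝ} (c : ℝ)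
    (hψ : ∀ x ∈ uIcc u v, HasDerivWithinAt ψ (ψ' x) (uIcc u v) x)
    (hψ' : IntervalIntegrable ψ' volume u v) :
    ∫ t in u..v, ψ t = (v - c) * ψ v - (u - c) * ψ u - ∫ t in u..v, (t - c) * ψ' t := by
  have h := integral_mul_deriv_eq_deriv_mul_of_hasDerivWithinAt (u := fun t => t - c)
    (u' := fun _ => 1) (fun x _ => (hasDerivWithinAt_id x _).sub_const c) hψ
    intervalIntegrable_const hψ'
  simp only [one_mul] at h
  linarith

section Kernel

variable {ψ ψ' : ℝ → ℝ} {a b : ℝ}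

theorem simpsonError_eq_integral_peanoKernel (hab : a < b)
    (hψ : ∀ x ∈ Icc a b, HasDerivWithinAt ψ (ψ' x) (Icc a b) x)
    (hψ' : IntervalIntegrable ψ' volume a b) :
    simpsonError ψ a b = 1 / (b - a) * ((∫ t in a..(a + b) / 2, (t - (5 * a + b) / 6) * ψ' t) +
      ∫ t in (a + b) / 2..b, (t - (a + 5 * b) / 6) * ψ' t) := by
  set m := (a + b) / 2 with hm
  have hψint : IntervalIntegrable ψ volume a b :=
    ContinuousOn.intervalIntegrable_of_Icc hab.le fun x hx => (hψ x hx).continuousWithinAt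
  rw [← uIcc_of_le hab.le] at hψ
  have hmid : m ∈ uIcc a b := by rw [uIcc_of_le hab.le]; constructor <;> linarith
  have hl := uIcc_subset_uIcc_left hmid
  have hr := uIcc_subset_uIcc_right hmid
  have left := integral_eq_sub_integral_sub_mul_deriv ((5 * a + b) / 6)
    (fun x hx => (hψ x (hl hx)).mono hl) (hψ'.mono_set hl)
  have right := integral_eq_sub_integral_sub_mul_deriv ((a + 5 * b) / 6)
    (fun x hx => (hψ x (hr hx)).mono hr) (hψ'.mono_set hr)
  have hL : b - a ≠ 0 := sub_ne_zero.2 hab.ne'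
  unfold simpsonError
  rw [← integral_add_adjacent_intervals (hψint.mono_set hl) (hψint.mono_set hr), left, right]
  field_simp
  ring

theorem abs_simpsonError_le {K : ℝ} (hab : a < b)
    (hψ : ∀ x ∈ Icc a b, HasDerivWithinAt ψ (ψ' x) (Icc a b) x)
    (hψ' : IntervalIntegrable ψ' volume a b) (hK : ∀ x ∈ Icc a b, |ψ' x| ≤ K) :
    |simpsonError ψ a b| ≤ 5 / 36 * K * (b - a) := by
  have hL : 0 < b - a := sub_pos.2 hab
  have left := abs_integral_sub_mul_le (u := a) (v := (a + b) / 2) (c := (5 * a + b) / 6)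
    (by linarith) (by linarith) fun x hx => hK x ⟨hx.1, by linarith [hx.2]⟩
  have right := abs_integral_sub_mul_le (u := (a + b) / 2) (v := b) (c := (a + 5 * b) / 6)
    (by linarith) (by linarith) fun x hx => hK x ⟨by linarith [hx.1], hx.2⟩
  rw [simpsonError_eq_integral_peanoKernel hab hψ hψ', abs_mul, abs_of_pos (one_div_pos.2 hL),
    one_div, inv_mul_le_iff₀ hL]
  linarith [abs_add_le (∫ t in a..(a + b) / 2, (t - (5 * a + b) / 6) * ψ' t)
    (∫ t in (a + b) / 2..b, (t - (a + 5 * b) / 6) * ψ' t)]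

end Kernel

theorem simpson_stmt4 (a b m₁ M₁ : ℝ) (hab : a < b) (φ φ' : ℝ → ℝ)
    (hφ' : ∀ x ∈ Set.Icc a b, HasDerivWithinAt φ (φ' x) (Set.Icc a b) x)
    (hcont : ContinuousOn φ' (Set.Icc a b))
    (hm : ∀ x ∈ Set.Icc a b, m₁ ≤ φ' x) (hM : ∀ x ∈ Set.Icc a b, φ' x ≤ M₁) :
    |(φ a + φ b) / 6 + 2 / 3 * φ ((a + b) / 2) - (1 / (b - a)) * ∫ t in a..b, φ t| ≤
      5 / 72 * (M₁ - m₁) * (b - a) := by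
  set d := (m₁ + M₁) / 2 with hd
  have hφint : IntervalIntegrable φ volume a b :=
    ContinuousOn.intervalIntegrable_of_Icc hab.le fun x hx => (hφ' x hx).continuousWithinAt
  have hψ : ∀ x ∈ Icc a b, HasDerivWithinAt (fun t => φ t - d * t) (φ' x - d) (Icc a b) x :=
    fun x hx => (hφ' x hx).sub (((hasDerivWithinAt_id x _).const_mul d).congr_deriv (mul_one d))
  have hψ' : IntervalIntegrable (fun x => φ' x - d) volume a b :=
    (hcont.sub continuousOn_const).intervalIntegrable_of_Icc hab.le
  have hK : ∀ x ∈ Icc a b, |φ' x - d| ≤ (M₁ - m₁) / 2 := fun x hx =>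
    abs_le.2 ⟨by linarith [hm x hx, hM x hx], by linarith [hm x hx, hM x hx]⟩
  have key := abs_simpsonError_le hab hψ hψ' hK
  rw [simpsonError_sub_const_mul_id hab.ne hφint] at key
  change |simpsonError φ a b| ≤ _
  linarith
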